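/- Fix n-independent constants τ, ω₁ > 0, and pick any η ∈ ℝ with |η| > 0, any 0 < T ≤ n^{−ω₁}, and any z ∈ ℂ with |z| ≤ 1 − τ. Then there exist initial data η₀ ∈ ℝ, z₀ ∈ ℂ with T*(z₀, η₀) ≥ T such that the solution (η_t, z_t) of the characteristic flow with this initial data satisfies η_T = η and z_T = z. Moreover |η₀| ≳ T and |z₀| ≤ 1 − τ/2. -/

import Mathlib

open MeasureTheory ProbabilityTheory Matrix Filter Finset
open scoped Real ComplexConjugate Matrix.Norms.L2Operator

noncomputable section

namespace RMT

/-- The space of `2n × 2n` complex matrices written in `2 × 2` block form. -/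
abbrev Mat (n : ℕ) := Matrix (Fin n ⊕ Fin n) (Fin n ⊕ Fin n) ℂ

/-- Normalized trace `⟨A⟩`. -/
def avgTr {m : Type*} [Fintype m] (A : Matrix m m ℂ) : ℂ :=
  (Fintype.card m : ℂ)⁻¹ * A.trace

/-- The matrix `E₋ = E₁ - E₂`. -/
def Eminus (n : ℕ) : Mat n := Matrix.fromBlocks 1 0 0 (-1)

/-- The covariance operator `S[R] = ⟨R⟩·1 - ⟨R E₋⟩·E₋`, as a linear endomorphism. -/
def covS (n : ℕ) : Mat n →ₗ[ℂ] Mat n where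
  toFun R := avgTr R • (1 : Mat n) - avgTr (R * Eminus n) • Eminus n
  map_add' R S := by
    simp only [avgTr, Matrix.add_mul, Matrix.trace_add, mul_add, add_smul]
    abel
  map_smul' c R := by
    simp only [avgTr, Matrix.smul_mul, Matrix.trace_smul, smul_eq_mul, RingHom.id_apply,
      smul_sub, smul_smul]
    congr 1 <;> · congr 1; ring

/-- The stability operator `B₁₂ = 1 - M₁ S[·] M₂`. -/
def stabEnd {n : ℕ} (M1 M2 : Mat n) : Module.End ℂ (Mat n) :=
  LinearMap.id - ((LinearMap.mulRight ℂ M2).comp ((LinearMap.mulLeft ℂ M1).comp (covS n)))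

/-- The adjoint (w.r.t. the Hilbert–Schmidt inner product) of the stability operator,
`B₁₂*[K] = K - S[M₁* K M₂*]`. -/
def adjStab {n : ℕ} (M1 M2 : Mat n) : Module.End ℂ (Mat n) :=
  LinearMap.id - ((covS n).comp ((LinearMap.mulRight ℂ M2ᴴ).comp (LinearMap.mulLeft ℂ M1ᴴ)))

/-- `M₁₂^A := B₁₂⁻¹[M₁ A M₂]`. -/
def M12 {n : ℕ} (M1 M2 A : Mat n) : Mat n := Ring.inverse (stabEnd M1 M2) (M1 * A * M2)

/-- `m` is the solution of the scalar Dyson equation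
`-1/m = iη + m - |z|²/(iη + m)` with side condition `Im m · η > 0`. -/
def IsMsc (msc : ℂ → ℝ → ℂ) : Prop :=
  ∀ (z : ℂ) (η : ℝ), η ≠ 0 →
    (-(msc z η)⁻¹ = Complex.I * η + msc z η
        - (Complex.normSq z : ℂ) / (Complex.I * η + msc z η)
      ∧ 0 < (msc z η).im * η)

/-- `u^z(iη) = iη / (iη + m^z(iη))`. -/
def usc (msc : ℂ → ℝ → ℂ) (z : ℂ) (η : ℝ) : ℂ :=
  (Complex.I * η) / (Complex.I * η + msc z η)

/-- The deterministic approximation `M^z(iη)` of the resolvent. -/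
def Mblock (msc : ℂ → ℝ → ℂ) (n : ℕ) (z : ℂ) (η : ℝ) : Mat n :=
  Matrix.fromBlocks ((msc z η) • 1) ((-(z * usc msc z η)) • 1)
    ((-((starRingEnd ℂ z) * usc msc z η)) • 1) ((msc z η) • 1)

/-- `M₁₂^A` at spectral parameters `(z₁, iη₁, z₂, iη₂)`. -/
def M12A (msc : ℂ → ℝ → ℂ) (n : ℕ) (z1 : ℂ) (η1 : ℝ) (z2 : ℂ) (η2 : ℝ) (A : Mat n) : Mat n :=
  M12 (Mblock msc n z1 η1) (Mblock msc n z2 η2) A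

/-- Hermitisation of a general (not necessarily square-symmetric) matrix. -/
def herm {n : ℕ} (X : Matrix (Fin n) (Fin n) ℂ) : Mat n := Matrix.fromBlocks 0 X Xᴴ 0

/-- Hermitisation `H^z` of `X - z`. -/
def Hz {n : ℕ} (X : Matrix (Fin n) (Fin n) ℂ) (z : ℂ) : Mat n :=
  herm (X - z • (1 : Matrix (Fin n) (Fin n) ℂ))

/-- Resolvent `G^z(iη) = (H^z - iη)⁻¹`. -/
def Gz {n : ℕ} (X : Matrix (Fin n) (Fin n) ℂ) (z : ℂ) (η : ℝ) : Mat n :=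
  (Hz X z - (Complex.I * η) • 1)⁻¹

/-- The generalized spectral parameter `Λ`. -/
def Lam (n : ℕ) (z : ℂ) (η : ℝ) : Mat n :=
  Matrix.fromBlocks ((Complex.I * η) • 1) (z • 1)
    ((starRingEnd ℂ z) • 1) ((Complex.I * η) • 1)

variable {Ω : Type*} [MeasureSpace Ω]

/-- Moment assumptions on the entry distribution `χ`. -/
structure EntryMoments (χ : Ω → ℂ) : Prop where
  meas : Measurable χ
  mean_zero : ∫ ω, χ ω = 0
  sq_zero : ∫ ω, (χ ω) ^ 2 = 0
  var_one : ∫ ω, ‖χ ω‖ ^ 2 = 1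
  moment_bound : ∀ p : ℕ, ∃ C : ℝ, ∫ ω, ‖χ ω‖ ^ p ≤ C

/-- `X` is an `n × n` i.i.d. random matrix with entries distributed as `n^{-1/2} χ`. -/
structure IsIIDMatrix (χ : Ω → ℂ) (n : ℕ) (X : Ω → Matrix (Fin n) (Fin n) ℂ) : Prop where
  meas : ∀ a b, Measurable fun ω => X ω a b
  indep : iIndepFun (m := fun _ : Fin n × Fin n => (inferInstance : MeasurableSpace ℂ))
    (fun p ω => X ω p.1 p.2) volume
  law : ∀ a b, Measure.map (fun ω => X ω a b) volume
    = Measure.map (fun ω => ((Real.sqrt n : ℝ) : ℂ)⁻¹ * χ ω) volume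

/-- The standard complex Gaussian law (mean `0`, `E|χ|² = 1`, `Eχ² = 0`). -/
def complexGaussian : Measure ℂ :=
  ((gaussianReal 0 (1/2)).prod (gaussianReal 0 (1/2))).map fun p => (p.1 : ℂ) + p.2 * Complex.I

/-- `X` is i.i.d. and `Γ` is a standard complex Ginibre matrix, with all entries of `X` and `Γ`
jointly independent. -/
structure IIDPlusGinibre (χ : Ω → ℂ) (n : ℕ) (X Γ : Ω → Matrix (Fin n) (Fin n) ℂ) : Prop where
  iid : IsIIDMatrix χ n X
  measG : ∀ a b, Measurable fun ω => Γ ω a b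
  lawG : ∀ a b, Measure.map (fun ω => Γ ω a b) volume = complexGaussian
  indepAll : iIndepFun
    (m := fun _ : (Fin n × Fin n) ⊕ (Fin n × Fin n) => (inferInstance : MeasurableSpace ℂ))
    (Sum.elim (fun p ω => X ω p.1 p.2) (fun p ω => Γ ω p.1 p.2)) volume

/-- The Ornstein–Uhlenbeck flow `dX_t = -½X_t dt + n^{-1/2} dB_t` started from `X`, realized
through its strong solution `X_t = e^{-t/2}(X + √((e^t-1)/n)·Γ)` with a Ginibre matrix `Γ`. -/
def ouFlow {n : ℕ} (X Γ : Ω → Matrix (Fin n) (Fin n) ℂ) (t : ℝ) (ω : Ω) :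
    Matrix (Fin n) (Fin n) ℂ :=
  ((Real.exp (-t / 2) : ℝ) : ℂ) •
    (X ω + ((Real.sqrt ((Real.exp t - 1) / n) : ℝ) : ℂ) • Γ ω)

/-- Laplacian of a test function on `ℂ ≅ ℝ²`. -/
def lap (f : ℂ → ℂ) (z : ℂ) : ℂ :=
  fderiv ℝ (fun w => fderiv ℝ f w 1) z 1 + fderiv ℝ (fun w => fderiv ℝ f w Complex.I) z Complex.I

/-- `|∇f|²`. -/
def gradSq (f : ℂ → ℂ) (z : ℂ) : ℝ :=
  ‖fderiv ℝ f z 1‖ ^ 2 + ‖fderiv ℝ f z Complex.I‖ ^ 2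

/-- `⟨∇g, ∇f⟩_{L²}`. -/
def gradInner (g f : ℂ → ℂ) : ℂ :=
  ∫ z : ℂ, ((starRingEnd ℂ) (fderiv ℝ g z 1) * fderiv ℝ f z 1
    + (starRingEnd ℂ) (fderiv ℝ g z Complex.I) * fderiv ℝ f z Complex.I)

/-- The mesoscopically rescaled test function `f_{z₀,a}(z) = f(nᵃ(z - z₀))`. -/
def resc (f : ℂ → ℂ) (z0 : ℂ) (a : ℝ) (n : ℕ) (z : ℂ) : ℂ :=
  f ((((n : ℝ) ^ a : ℝ) : ℂ) * (z - z0))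

/-- Linear eigenvalue statistic `∑ᵢ g(σᵢ)`, the `σᵢ` being the roots of the characteristic
polynomial (with multiplicity). -/
def eigSum {n : ℕ} (X : Matrix (Fin n) (Fin n) ℂ) (g : ℂ → ℂ) : ℂ :=
  ((X.charpoly.roots).map g).sum

/-- Centered linear statistic `L_n(g)`. -/
def Ln {n : ℕ} (X : Ω → Matrix (Fin n) (Fin n) ℂ) (g : ℂ → ℂ) (ω : Ω) : ℂ :=
  eigSum (X ω) g - ∫ ω', eigSum (X ω') g

/-- `V_{i,j}` from the resolvent CLT. -/
def Vfun (msc : ℂ → ℝ → ℂ) (z1 z2 : ℂ) (η1 η2 : ℝ) : ℂ :=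
  (1 / 2 : ℂ) * deriv (fun s : ℝ => deriv (fun t : ℝ =>
    Complex.log (1
      + (usc msc z1 s * usc msc z2 t * (‖z1‖ : ℂ) * (‖z2‖ : ℂ)) ^ 2
      - (msc z1 s) ^ 2 * (msc z2 t) ^ 2
      - 2 * usc msc z1 s * usc msc z2 t * ((z1 * (starRingEnd ℂ) z2).re : ℂ))) η2) η1

/-- `U_i` from the resolvent CLT. -/
def Ufun (msc : ℂ → ℝ → ℂ) (z : ℂ) (η : ℝ) : ℂ :=
  (Complex.I / (Real.sqrt 2 : ℂ)) * deriv (fun t : ℝ => (msc z t) ^ 2) η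

/-- A pairing of `[p]`, encoded as a fixed-point-free involution. -/
def IsPairing {p : ℕ} (f : Fin p → Fin p) : Prop :=
  Function.Involutive f ∧ ∀ i, f i ≠ i

open scoped Classical in
/-- `∑_{P ∈ Π_p} ∏_{{i,j} ∈ P} F i j`. -/
def pairingSum (p : ℕ) (F : Fin p → Fin p → ℂ) : ℂ :=
  ∑ f : Fin p → Fin p, if IsPairing f then
    ∏ i ∈ Finset.univ.filter fun i => i < f i, F i (f i) else 0

/-- A measure on `ℂ` is a centered complex Gaussian law iff it is the image of the standard
two-dimensional real Gaussian under a real-linear map `ℝ² → ℂ`. -/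
def IsCenteredComplexGaussian (μ : Measure ℂ) : Prop :=
  ∃ a b : ℂ, μ = Measure.map (fun p : ℝ × ℝ => a * p.1 + b * p.2)
    ((gaussianReal 0 1).prod (gaussianReal 0 1))

/-- `Im` of a matrix: `(A - A*)/(2i)`. -/
def imPart {n : ℕ} (A : Mat n) : Mat n := (2 * Complex.I)⁻¹ • (A - Aᴴ)

end RMT


/-!
On the imaginary axis `m^z(iη) = i v` is purely imaginary, and `v` is the unique root of sign
`sgn η` of a cubic that is covariant under `η + v ↦ r (η + v)`, `v ↦ v / r`, `|z|² ↦ r² |z|²`.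
Hence the characteristic flow ending at `(η, z)` at time `T` is explicit:
`z_t = e^{(T-t)/2} z`, `η_t = (η + v) e^{(T-t)/2} - v e^{(t-T)/2}`, and along it
`Im m^{z_t}(iη_t) = v e^{(t-T)/2}` keeps the sign of `v`, so `η_t` never crosses the real axis.
The bound `|η₀| ≳ T` follows from `|η₀| ≥ |η| + |v| T / 2` and `|v| ≥ τ / 2` whenever `|η| < 1`.
-/

/-- The Dyson equation and its sign condition for `m = i v` at `iη`, with `s = |z|²`. -/
def IsImDysonSol (η s v : ℝ) : Prop :=
  0 < v * η ∧ η + v = v * (η + v) ^ 2 + s * v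

namespace IsImDysonSol

variable {η s v : ℝ}

theorem ne_zero (h : IsImDysonSol η s v) : η ≠ 0 := by
  rintro rfl; simpa using h.1

theorem neg (h : IsImDysonSol η s v) : IsImDysonSol (-η) s (-v) :=
  ⟨by linarith [h.1, neg_mul_neg v η], by linear_combination -h.2⟩

theorem abs (h : IsImDysonSol η s v) : IsImDysonSol |η| s |v| := by
  rcases h.ne_zero.lt_or_gt with hη | hη
  · have hv : v < 0 := by nlinarith [h.1]
    simpa [abs_of_neg hη, abs_of_neg hv] using h.neg
  · have hv : 0 < v := by nlinarith [h.1]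
    simpa [abs_of_pos hη, abs_of_pos hv] using h

theorem unique {v' : ℝ} (h : IsImDysonSol η s v) (h' : IsImDysonSol η s v') : v = v' := by
  have hvv' : 0 < v * v' := by nlinarith [mul_pos h.1 h'.1, sq_nonneg η]
  have hfactor : (v - v') * (η + v * v' * ((η + v) + (η + v'))) = 0 := by
    linear_combination v * h'.2 - v' * h.2
  have hne : η * (η + v * v' * ((η + v) + (η + v'))) ≠ 0 := by
    nlinarith [mul_pos hvv' (add_pos h.1 h'.1), sq_pos_of_ne_zero h.ne_zero]
  have := (mul_eq_zero.mp hfactor).resolve_right (right_ne_zero_of_mul hne)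
  linarith

theorem rescale (h : IsImDysonSol η s v) {r : ℝ} (hr : 1 ≤ r) :
    IsImDysonSol ((η + v) * r - v * r⁻¹) (r ^ 2 * s) (v * r⁻¹) := by
  have hr0 : r ≠ 0 := by positivity
  have hrinv : r⁻¹ ^ 2 ≤ 1 := pow_le_one₀ (by positivity) (inv_le_one_of_one_le₀ hr)
  refine ⟨?_, ?_⟩
  · have : v * r⁻¹ * ((η + v) * r - v * r⁻¹) = v * η + v ^ 2 * (1 - r⁻¹ ^ 2) := by
      field_simp; ring
    rw [this]; nlinarith [h.1, sq_nonneg v]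
  · field_simp
    linear_combination r ^ 4 * h.2

theorem half_le_abs_of_abs_lt_one {τ : ℝ} (h : IsImDysonSol η s v) (hs : 0 ≤ s) (hsτ : s ≤ 1 - τ)
    (hη : |η| < 1) : τ / 2 ≤ |v| := by
  obtain ⟨hpos, hcubic⟩ := h.abs
  have ha : 0 < |η| := abs_pos.mpr h.ne_zero
  have hb : 0 < |v| := pos_of_mul_pos_left hpos ha.le
  have hfactor : (|η| + |v|) * (1 - |v| * (|η| + |v|)) = s * |v| := by linear_combination hcubic
  have hle_one : |v| * (|η| + |v|) ≤ 1 := by nlinarith [mul_nonneg hs hb.le]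
  have hb1 : |v| ≤ 1 := by nlinarith
  have hge : 1 - |v| * (|η| + |v|) ≤ s := by nlinarith [mul_nonneg hs ha.le]
  nlinarith

theorem min_mul_le {τ T : ℝ} (h : IsImDysonSol η s v) (hs : 0 ≤ s) (hsτ : s ≤ 1 - τ)
    (hT : 0 ≤ T) (hT1 : T ≤ 1) : min 1 (τ / 4) * T ≤ |η| + |v| * (T / 2) := by
  have hv := abs_nonneg v
  rcases le_or_gt 1 |η| with hη | hη
  · nlinarith [min_le_left 1 (τ / 4)]
  · nlinarith [mul_le_mul_of_nonneg_right (min_le_right 1 (τ / 4)) hT,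
      h.half_le_abs_of_abs_lt_one hs hsτ hη, abs_nonneg η]

end IsImDysonSol

open Complex in
theorem isImDysonSol_of_dyson {m z : ℂ} {η : ℝ} (hsign : 0 < m.im * η)
    (heq : -m⁻¹ = I * η + m - (normSq z : ℂ) / (I * η + m)) :
    IsImDysonSol η (normSq z) m.im := by
  set s := normSq z
  have hm : m ≠ 0 := fun h => by simp [h] at hsign
  have hw : I * η + m ≠ 0 := fun h => by
    have := congrArg Complex.im h
    simp only [add_im, mul_im, I_re, I_im, ofReal_re, ofReal_im, zero_im] at this
    have him : m.im = -η := by linarith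
    rw [him] at hsign
    nlinarith [sq_nonneg η]
  have hpoly : m * (I * η + m) ^ 2 - s * m + (I * η + m) = 0 := by
    field_simp at heq
    linear_combination -heq
  have hre := congrArg Complex.re hpoly
  have him := congrArg Complex.im hpoly
  simp only [pow_two, add_re, sub_re, mul_re, I_re, ofReal_re, zero_mul, I_im, ofReal_im, mul_zero,
    sub_self, zero_add, add_im, mul_im, one_mul, sub_zero, zero_re, sub_im, add_zero, zero_im]
    at hre him
  have hre0 : m.re = 0 := by
    by_contra ha
    have hK : m.re ^ 2 + 1 - s = (η + m.im) ^ 2 + 2 * m.im * (η + m.im) := by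
      have : m.re * (m.re ^ 2 + 1 - s - (η + m.im) ^ 2 - 2 * m.im * (η + m.im)) = 0 := by
        linear_combination hre
      linarith [(mul_eq_zero.mp this).resolve_left ha]
    -- impossible: `(η + v) v > v²` while the second factor is `≥ 1`
    have hlin : (η + m.im) * (1 + 2 * m.re ^ 2 + 2 * m.im ^ 2) = m.im := by
      linear_combination him - m.im * hK
    have hQ : 0 ≤ (m.im * η + m.im ^ 2) * (2 * m.re ^ 2 + 2 * m.im ^ 2) := by positivity
    have : m.im * η + (m.im * η + m.im ^ 2) * (2 * m.re ^ 2 + 2 * m.im ^ 2) = 0 := by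
      linear_combination m.im * hlin
    linarith
  refine ⟨hsign, ?_⟩
  rw [hre0] at him
  linear_combination him

theorem RMT.IsMsc.isImDysonSol {msc : ℂ → ℝ → ℂ} (hmsc : RMT.IsMsc msc) (z : ℂ) {η : ℝ}
    (hη : η ≠ 0) : IsImDysonSol η (Complex.normSq z) (msc z η).im :=
  isImDysonSol_of_dyson (hmsc z η hη).2 (hmsc z η hη).1

open Real

def charEta (η v T t : ℝ) : ℝ := (η + v) * exp ((T - t) / 2) - v * exp ((t - T) / 2)

def charZ (z : ℂ) (T t : ℝ) : ℂ := (exp ((T - t) / 2) : ℂ) * z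

section CharFlow

variable {η v T t : ℝ} {z : ℂ}

@[simp] theorem charEta_self : charEta η v T T = η := by simp [charEta]

@[simp] theorem charZ_self : charZ z T T = z := by simp [charZ]

theorem hasDerivAt_charEta :
    HasDerivAt (charEta η v T) (-(v * exp ((t - T) / 2)) - charEta η v T t / 2) t := by
  have hfwd : HasDerivAt (fun t => (T - t) / 2) (-1 / 2) t :=
    ((hasDerivAt_id t).const_sub T).div_const 2
  have hbwd : HasDerivAt (fun t => (t - T) / 2) (1 / 2) t :=
    ((hasDerivAt_id t).sub_const T).div_const 2
  refine ((hfwd.exp.const_mul (η + v)).sub (hbwd.exp.const_mul v)).congr_deriv ?_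
  simp only [charEta]; ring

theorem hasDerivAt_charZ : HasDerivAt (charZ z T) (-charZ z T t / 2) t := by
  have hfwd : HasDerivAt (fun t => (T - t) / 2) (-1 / 2) t :=
    ((hasDerivAt_id t).const_sub T).div_const 2
  refine (hfwd.exp.ofReal_comp.mul_const z).congr_deriv ?_
  simp only [charZ]; push_cast; ring

theorem IsImDysonSol.charFlow (h : IsImDysonSol η (Complex.normSq z) v) (ht : t ≤ T) :
    IsImDysonSol (charEta η v T t) (Complex.normSq (charZ z T t)) (v * exp ((t - T) / 2)) := by
  have hinv : exp ((t - T) / 2) = (exp ((T - t) / 2))⁻¹ := by rw [← exp_neg]; ring_nf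
  have hnormSq : Complex.normSq (charZ z T t) = exp ((T - t) / 2) ^ 2 * Complex.normSq z := by
    simp only [charZ, Complex.normSq_mul, Complex.normSq_ofReal]; ring
  rw [hnormSq, charEta, hinv]
  exact h.rescale (one_le_exp (by linarith))

theorem RMT.IsMsc.im_charFlow {msc : ℂ → ℝ → ℂ} (hmsc : RMT.IsMsc msc) (hη : η ≠ 0)
    (ht : t ≤ T) :
    (msc (charZ z T t) (charEta η (msc z η).im T t)).im = (msc z η).im * exp ((t - T) / 2) :=
  have hflow := (hmsc.isImDysonSol z hη).charFlow ht
  (hmsc.isImDysonSol _ hflow.ne_zero).unique hflow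

theorem le_abs_charEta_zero (h : 0 < v * η) (hT : 0 ≤ T) :
    |η| + |v| * (T / 2) ≤ |charEta η v T 0| := by
  have hgrow : T / 2 + 1 ≤ exp ((T - 0) / 2) := by simpa using add_one_le_exp (T / 2)
  have hdecay : exp ((0 - T) / 2) ≤ 1 := exp_le_one_iff.mpr (by linarith)
  have hdecay' := (exp_pos ((0 - T) / 2)).le
  simp only [charEta]
  rcases lt_or_gt_of_ne (show η ≠ 0 by rintro rfl; simp at h) with hη | hη
  · have hv : v < 0 := by nlinarith
    rw [abs_of_neg hη, abs_of_neg hv]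
    refine le_trans ?_ (neg_le_abs _)
    nlinarith
  · have hv : 0 < v := by nlinarith
    rw [abs_of_pos hη, abs_of_pos hv]
    refine le_trans ?_ (le_abs_self _)
    nlinarith

theorem norm_charZ_zero_le {τ : ℝ} (hz : ‖z‖ ≤ 1 - τ) (hT : exp (T / 2) ≤ 1 + τ / 2) :
    ‖charZ z T 0‖ ≤ 1 - τ / 2 := by
  rw [charZ, norm_mul, Complex.norm_real, norm_of_nonneg (exp_pos _).le, sub_zero]
  nlinarith [mul_le_mul hT hz (norm_nonneg z) ((exp_pos _).le.trans hT), sq_nonneg τ]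

end CharFlow

theorem exists_charFlow_hitting {msc : ℂ → ℝ → ℂ} (hmsc : RMT.IsMsc msc) {τ η T : ℝ} {z : ℂ}
    (hη : η ≠ 0) (hz : ‖z‖ ≤ 1 - τ) (hT : 0 < T) (hT1 : T ≤ 1)
    (hTτ : exp (T / 2) ≤ 1 + τ / 2) :
    ∃ (η0 : ℝ) (z0 : ℂ) (ηf : ℝ → ℝ) (zf : ℝ → ℂ),
      ηf 0 = η0 ∧ zf 0 = z0 ∧ η0 ≠ 0 ∧
      (∀ t ∈ Set.Icc (0 : ℝ) T,
        HasDerivAt ηf (-(msc (zf t) (ηf t)).im - ηf t / 2) t ∧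
        HasDerivAt zf (-(zf t) / 2) t) ∧
      (∀ t ∈ Set.Icc (0 : ℝ) T, 0 < ηf t * η0) ∧
      ηf T = η ∧ zf T = z ∧
      min 1 (τ / 4) * T ≤ |η0| ∧ ‖z0‖ ≤ 1 - τ / 2 := by
  set v := (msc z η).im
  have hsol : IsImDysonSol η (Complex.normSq z) v := hmsc.isImDysonSol z hη
  have hflow (t : ℝ) (ht : t ≤ T) := hsol.charFlow ht
  have hsign (t : ℝ) (ht : t ≤ T) : 0 < v * charEta η v T t := by
    have := (hflow t ht).1
    rw [mul_right_comm] at this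
    exact pos_of_mul_pos_left this (exp_pos _).le
  have hs : Complex.normSq z ≤ 1 - τ := by
    have hτ : 0 < τ := by linarith [add_one_le_exp (T / 2)]
    rw [Complex.normSq_eq_norm_sq]; nlinarith [norm_nonneg z]
  refine ⟨_, _, charEta η v T, charZ z T, rfl, rfl, (hflow 0 hT.le).ne_zero,
    fun t ht => ⟨?_, hasDerivAt_charZ⟩, fun t ht => ?_, charEta_self, charZ_self, ?_,
    norm_charZ_zero_le hz hTτ⟩
  · rw [hmsc.im_charFlow hη ht.2]
    exact hasDerivAt_charEta
  · nlinarith [mul_pos (hsign t ht.2) (hsign 0 hT.le), sq_nonneg v]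
  · calc min 1 (τ / 4) * T ≤ |η| + |v| * (T / 2) :=
          hsol.min_mul_le (Complex.normSq_nonneg z) hs hT.le hT1
      _ ≤ |charEta η v T 0| := le_abs_charEta_zero hsol.1 hT.le

open RMT in
/-- existence of initial data for the characteristic flow reaching a prescribed
target `(η, z)` after a prescribed short time `T ≤ n^{-ω₁}`. -/
theorem statement10 (τ ω₁ : ℝ) (hτ : 0 < τ) (hω₁ : 0 < ω₁)
    (msc : ℂ → ℝ → ℂ) (hmsc : IsMsc msc) :
    ∃ c > 0, ∃ N : ℕ, ∀ n : ℕ, N ≤ n →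
      ∀ (η : ℝ) (z : ℂ) (T : ℝ), η ≠ 0 → ‖z‖ ≤ 1 - τ →
        0 < T → T ≤ (n : ℝ) ^ (-ω₁) →
        ∃ (η0 : ℝ) (z0 : ℂ) (ηf : ℝ → ℝ) (zf : ℝ → ℂ),
          ηf 0 = η0 ∧ zf 0 = z0 ∧ η0 ≠ 0 ∧
          (∀ t ∈ Set.Icc (0 : ℝ) T,
            HasDerivAt ηf (-(msc (zf t) (ηf t)).im - ηf t / 2) t ∧
            HasDerivAt zf (-(zf t) / 2) t) ∧
          (∀ t ∈ Set.Icc (0 : ℝ) T, 0 < ηf t * η0) ∧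
          ηf T = η ∧ zf T = z ∧
          c * T ≤ |η0| ∧ ‖z0‖ ≤ 1 - τ / 2 := by
  have hlog : 0 < log (1 + τ / 2) := log_pos (by linarith)
  obtain ⟨N, hN⟩ := eventually_atTop.mp <|
    ((tendsto_rpow_neg_atTop hω₁).comp tendsto_natCast_atTop_atTop).eventually_lt_const
      (lt_min one_pos (mul_pos two_pos hlog))
  refine ⟨min 1 (τ / 4), by positivity, N, fun n hn η z T hη hz hT hTn => ?_⟩
  have hTsmall := hTn.trans (hN n hn).le
  have hTτ : exp (T / 2) ≤ 1 + τ / 2 := by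
    rw [← le_log_iff_exp_le (by linarith)]
    linarith [min_le_right 1 (2 * log (1 + τ / 2))]
  exact exists_charFlow_hitting hmsc hη hz hT (hTsmall.trans (min_le_left _ _)) hTτ
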